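/- arXiv:1401.2326 — 4 statements merged into one kernel-verified Lean document; each statement's English description precedes it below -/
import Mathlib

section
/- Let 0 < T < 1, α₁ > 1/2, and suppose α₀ ≥ (1/2 - α₁)/((1/2 - α₁)·ln(1-T) + 1) + 1/2 and α₀ + α₁ ≥ 1. Define G(σ) = (σ + α₀ - 1/2)(σ + α₁ - 1/2) - (1-T)^{2σ}(σ - α₀ + 1/2)(σ - α₁ + 1/2). Then G(σ) > 0 for all σ > 0. -/
/-!
With `a = α₀ - 1/2`, `b = α₁ - 1/2` and `ℓ = -log (1 - T) > 0`, the function is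
`g σ = (σ + a)(σ + b) - e^{-2ℓσ} (σ - a)(σ - b)`, which vanishes at `0`. Its derivative is
`e^{-2ℓσ} H σ` with `H σ = e^{2ℓσ} (2σ + a + b) + 2ℓ (σ - a)(σ - b) - (2σ - a - b)`; the bound
`e^x ≥ 1 + x + x²/2` gives `H σ ≥ 2 (a + b + ℓab) + 6ℓσ² > 0`, where `a + b + ℓab ≥ 0` is the
hypothesis on `α₀`. Hence `g` is strictly increasing on `[0, ∞)`.
-/

open Real Set

section
variable {a b ℓ : ℝ}

lemma hasDerivAt_mul_sub_exp_mul (σ : ℝ) :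
    HasDerivAt (fun t => (t + a) * (t + b) - exp (-(2 * ℓ * t)) * ((t - a) * (t - b)))
      (exp (-(2 * ℓ * σ)) * (exp (2 * ℓ * σ) * (2 * σ + (a + b))
        + 2 * ℓ * ((σ - a) * (σ - b)) - (2 * σ - (a + b)))) σ := by
  have hP := ((hasDerivAt_id' σ).add_const a).mul ((hasDerivAt_id' σ).add_const b)
  have hQ := ((hasDerivAt_id' σ).sub_const a).mul ((hasDerivAt_id' σ).sub_const b)
  have hE := ((hasDerivAt_id' σ).const_mul (2 * ℓ)).neg.exp
  refine (hP.sub (hE.mul hQ)).congr_deriv ?_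
  have hinv : exp (-(2 * ℓ * σ)) * exp (2 * ℓ * σ) = 1 := by
    rw [← exp_add, neg_add_cancel, exp_zero]
  simp only [Pi.neg_apply, Pi.mul_apply]
  linear_combination -(2 * σ + (a + b)) * hinv

theorem mul_sub_exp_mul_pos (hℓ : 0 < ℓ) (hs : 0 ≤ a + b) (hab : 0 ≤ a + b + ℓ * a * b)
    {σ : ℝ} (hσ : 0 < σ) :
    0 < (σ + a) * (σ + b) - exp (-(2 * ℓ * σ)) * ((σ - a) * (σ - b)) := by
  have hderiv_pos : ∀ t, 0 < t → 0 < exp (2 * ℓ * t) * (2 * t + (a + b))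
      + 2 * ℓ * ((t - a) * (t - b)) - (2 * t - (a + b)) := by
    intro t ht
    have hexp : 1 + 2 * ℓ * t + (2 * ℓ * t) ^ 2 / 2 ≤ exp (2 * ℓ * t) :=
      quadratic_le_exp_of_nonneg (by positivity)
    have hlin : 0 ≤ 2 * t + (a + b) := by linarith
    nlinarith [mul_le_mul_of_nonneg_right hexp hlin, mul_pos hℓ (mul_pos ht ht)]
  set g := fun t => (t + a) * (t + b) - exp (-(2 * ℓ * t)) * ((t - a) * (t - b))
  have hmono : StrictMonoOn g (Ici 0) := by
    refine strictMonoOn_of_deriv_pos (convex_Ici 0)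
      (fun t _ => (hasDerivAt_mul_sub_exp_mul t).continuousAt.continuousWithinAt) ?_
    intro t ht
    rw [interior_Ici] at ht
    rw [(hasDerivAt_mul_sub_exp_mul t).deriv]
    exact mul_pos (exp_pos _) (hderiv_pos t ht)
  have hg0 : g 0 = 0 := by simp [g]
  exact hg0 ▸ hmono self_mem_Ici hσ.le hσ

theorem mul_sub_rpow_mul_pos {x : ℝ} (hx0 : 0 < x) (hx1 : x < 1) (hs : 0 ≤ a + b)
    (hab : 0 ≤ a + b - log x * a * b) {σ : ℝ} (hσ : 0 < σ) :
    0 < (σ + a) * (σ + b) - x ^ (2 * σ) * ((σ - a) * (σ - b)) := by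
  have hℓ : 0 < -log x := neg_pos.2 (log_neg hx0 hx1)
  have h := mul_sub_exp_mul_pos hℓ hs (by linarith) hσ
  rwa [rpow_def_of_pos hx0, show log x * (2 * σ) = -(2 * -log x * σ) by ring]

end

theorem stmt_1 (T α₀ α₁ : ℝ) (hT0 : 0 < T) (hT1 : T < 1) (hα₁ : 1/2 < α₁)
    (hα₀ : α₀ ≥ (1/2 - α₁) / ((1/2 - α₁) * Real.log (1-T) + 1) + 1/2)
    (hsum : α₀ + α₁ ≥ 1)
    (G : ℝ → ℝ)
    (hG : G = fun σ => (σ + α₀ - 1/2) * (σ + α₁ - 1/2)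
      - (1-T) ^ (2*σ) * ((σ - α₀ + 1/2) * (σ - α₁ + 1/2))) :
    ∀ σ > (0:ℝ), G σ > 0 := by
  intro σ hσ
  have hL : log (1 - T) < 0 := log_neg (by linarith) (by linarith)
  have hD : 0 < (1/2 - α₁) * log (1 - T) + 1 := by nlinarith
  have hα₀' : 1/2 - α₁ ≤ (α₀ - 1/2) * ((1/2 - α₁) * log (1 - T) + 1) := by
    rw [← div_le_iff₀ hD]; linarith
  have h := mul_sub_rpow_mul_pos (a := α₀ - 1/2) (b := α₁ - 1/2) (x := 1 - T)
    (by linarith) (by linarith) (by linarith) (by nlinarith) hσ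
  subst hG
  convert h using 2 <;> ring
end

section
/- Let 0 < T < 1, α₁ > 1/2, α₀ + α₁ > 1, and α₀ < (1/2 - α₁)/((1/2 - α₁)·ln(1-T) + 1) + 1/2. Define G(σ) = (σ + α₀ - 1/2)(σ + α₁ - 1/2) - (1-T)^{2σ}(σ - α₀ + 1/2)(σ - α₁ + 1/2). Then G'(0) = 2(α₀ + α₁ - 1) - 2·ln(1-T)·(1/2 - α₀)(1/2 - α₁) and G'(0) < 0. -/
open Real

theorem hasDerivAt_mul_sub_rpow_mul_at_zero {c : ℝ} (hc : 0 < c) (p q : ℝ) :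
    HasDerivAt (fun σ : ℝ => (σ + p) * (σ + q) - c ^ (2 * σ) * ((σ - p) * (σ - q)))
      (2 * (p + q) - 2 * log c * (p * q)) 0 := by
  have hlin : ∀ s : ℝ, HasDerivAt (fun σ : ℝ => σ + s) 1 0 := fun s =>
    (hasDerivAt_id 0).add_const s
  have h : HasDerivAt (fun σ : ℝ => (σ + p) * (σ + q) - c ^ (2 * σ) * ((σ + -p) * (σ + -q)))
      _ 0 := ((hlin p).mul (hlin q)).sub
    ((((hasDerivAt_id (0 : ℝ)).const_mul 2).const_rpow hc).mul ((hlin (-p)).mul (hlin (-q))))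
  simp only [← sub_eq_add_neg, id, mul_zero, rpow_zero] at h
  convert h using 1
  ring

/-- Since `1 - q * L > 0`, the hypothesis reads `p * (1 - q * L) + q < 0`, which is half the claim. -/
theorem two_mul_add_sub_mul_neg {L p q : ℝ} (hL : L < 0) (hq : 0 < q)
    (hp : p < -q / (1 - q * L)) : 2 * (p + q) - 2 * L * (p * q) < 0 := by
  have hden : 0 < 1 - q * L := by nlinarith
  have := (lt_div_iff₀ hden).mp hp
  nlinarith

theorem stmt_3_general (T α₀ α₁ : ℝ) (hT0 : 0 < T) (hT1 : T < 1) (hα₁ : 1/2 < α₁)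
    (hα₀ : α₀ < (1/2 - α₁) / ((1/2 - α₁) * Real.log (1-T) + 1) + 1/2)
    (G : ℝ → ℝ)
    (hG : G = fun σ => (σ + α₀ - 1/2) * (σ + α₁ - 1/2)
      - (1-T) ^ (2*σ) * ((σ - α₀ + 1/2) * (σ - α₁ + 1/2))) :
    deriv G 0 = 2 * (α₀ + α₁ - 1) - 2 * Real.log (1-T) * ((1/2 - α₀) * (1/2 - α₁)) ∧
    deriv G 0 < 0 := by
  set L := log (1 - T)
  have hG' : HasDerivAt G
      (2 * ((α₀ - 1/2) + (α₁ - 1/2)) - 2 * L * ((α₀ - 1/2) * (α₁ - 1/2))) 0 := by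
    convert hasDerivAt_mul_sub_rpow_mul_at_zero (sub_pos.2 hT1) (α₀ - 1/2) (α₁ - 1/2) using 1
    rw [hG]; funext σ; ring
  rw [hG'.deriv]
  refine ⟨by ring, two_mul_add_sub_mul_neg (log_neg (by linarith) (by linarith)) (by linarith) ?_⟩
  convert sub_lt_sub_right hα₀ (1/2) using 1
  ring

theorem stmt_3 (T α₀ α₁ : ℝ) (hT0 : 0 < T) (hT1 : T < 1) (hα₁ : 1/2 < α₁)
    (hsum : α₀ + α₁ > 1)
    (hα₀ : α₀ < (1/2 - α₁) / ((1/2 - α₁) * Real.log (1-T) + 1) + 1/2)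
    (G : ℝ → ℝ)
    (hG : G = fun σ => (σ + α₀ - 1/2) * (σ + α₁ - 1/2)
      - (1-T) ^ (2*σ) * ((σ - α₀ + 1/2) * (σ - α₁ + 1/2))) :
    deriv G 0 = 2 * (α₀ + α₁ - 1) - 2 * Real.log (1-T) * ((1/2 - α₀) * (1/2 - α₁)) ∧
    deriv G 0 < 0 :=
  stmt_3_general T α₀ α₁ hT0 hT1 hα₁ hα₀ G hG
end

section
/- Let 0 < T < 1, α₁ > 1/2, α₀ + α₁ > 1, and α₀ < (1/2 - α₁)/((1/2 - α₁)·ln(1-T) + 1) + 1/2. Define G(σ) = (σ + α₀ - 1/2)(σ + α₁ - 1/2) - (1-T)^{2σ}(σ - α₀ + 1/2)(σ - α₁ + 1/2). Then G''(σ) > 0 for all σ with 0 ≤ σ ≤ 1/2 - α₀, i.e., G is strictly convex on [0, 1/2 - α₀]. -/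
/-!
Write `a = α₀ - 1/2`, `b = α₁ - 1/2`, `L = log (1 - T) < 0`, so that
`G σ = (σ + a)(σ + b) - exp (2Lσ) (σ - a)(σ - b)`. Then
`G'' σ = 2 (1 - exp (2Lσ)) - 4L exp (2Lσ) f σ` with `f σ = L (σ - a)(σ - b) + 2σ - a - b`,
and the first term is nonnegative for `σ ≥ 0`. The bound on `α₀` says exactly `f 0 > 0`, and
together with `a + b > 0` it also gives `f (-a) > 0`; as `f` is a concave quadratic it is then
positive on `[0, -a]`.
-/

open Real

lemma quadratic_pos_of_pos_of_pos {A B C c x : ℝ} (hA : A ≤ 0) (h0 : 0 < C)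
    (hc : 0 < A * c ^ 2 + B * c + C) (hx0 : 0 ≤ x) (hxc : x ≤ c) :
    0 < A * x ^ 2 + B * x + C := by
  rcases hx0.eq_or_lt with rfl | hx
  · simpa using h0
  have hc0 : 0 < c := hx.trans_le hxc
  -- The quadratic lies above its chord on `[0, c]`.
  have hchord : c * (A * x ^ 2 + B * x + C)
      = (c - x) * C + x * (A * c ^ 2 + B * c + C) + (-A) * c * x * (c - x) := by ring
  have hbow : 0 ≤ (-A) * c * x * (c - x) :=
    mul_nonneg (mul_nonneg (mul_nonneg (neg_nonneg.mpr hA) hc0.le) hx.le) (sub_nonneg.mpr hxc)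
  have hC : 0 ≤ (c - x) * C := mul_nonneg (sub_nonneg.mpr hxc) h0.le
  exact pos_of_mul_pos_right (by nlinarith [mul_pos hx hc]) hc0.le

lemma iteratedDeriv_two_quad_sub_exp_mul_quad (a b k σ : ℝ) :
    iteratedDeriv 2 (fun s => (s + a) * (s + b) - exp (k * s) * ((s - a) * (s - b))) σ
      = 2 - exp (k * σ) * (k ^ 2 * ((σ - a) * (σ - b)) + 2 * k * (2 * σ - a - b) + 2) := by
  have hexp (s : ℝ) : HasDerivAt (fun s => exp (k * s)) (exp (k * s) * k) s := by
    simpa using ((hasDerivAt_id s).const_mul k).exp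
  have hlin (c s : ℝ) : HasDerivAt (fun s => s + c) 1 s := (hasDerivAt_id s).add_const c
  have hprod (c d s : ℝ) : HasDerivAt (fun s => (s + c) * (s + d)) (2 * s + c + d) s :=
    ((hlin c s).mul (hlin d s)).congr_deriv (by ring)
  have hP (s : ℝ) : HasDerivAt (fun s => (s - a) * (s - b)) (2 * s - a - b) s := by
    simpa only [← sub_eq_add_neg] using hprod (-a) (-b) s
  have hderiv : deriv (fun s => (s + a) * (s + b) - exp (k * s) * ((s - a) * (s - b)))
      = fun s => 2 * s + a + b
          - exp (k * s) * (k * ((s - a) * (s - b)) + (2 * s - a - b)) := by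
    funext s
    refine ((hprod a b s).sub ((hexp s).mul (hP s))).deriv.trans ?_
    ring
  rw [iteratedDeriv_succ, iteratedDeriv_one, hderiv]
  have hQ' : HasDerivAt (fun s => 2 * s + a + b) 2 σ := by
    simpa using (((hasDerivAt_id σ).const_mul 2).add_const a).add_const b
  have hP' : HasDerivAt (fun s => 2 * s - a - b) 2 σ := by
    simpa using (((hasDerivAt_id σ).const_mul 2).sub_const a).sub_const b
  have hinner : HasDerivAt (fun s => k * ((s - a) * (s - b)) + (2 * s - a - b))
      (k * (2 * σ - a - b) + 2) σ :=
    ((hP σ).const_mul k).add hP'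
  refine (hQ'.sub ((hexp σ).mul hinner)).deriv.trans ?_
  ring

lemma two_sub_exp_mul_pos {k σ P P' : ℝ} (hk : k < 0) (hσ : 0 ≤ σ) (h : 0 < k * P + 2 * P') :
    0 < 2 - exp (k * σ) * (k ^ 2 * P + 2 * k * P' + 2) := by
  have hexp_le : exp (k * σ) ≤ 1 := exp_le_one_iff.mpr (mul_nonpos_of_nonpos_of_nonneg hk.le hσ)
  have hdrift : 0 < -k * exp (k * σ) * (k * P + 2 * P') :=
    mul_pos (mul_pos (neg_pos.mpr hk) (exp_pos _)) h
  calc 0 < 2 * (1 - exp (k * σ)) + -k * exp (k * σ) * (k * P + 2 * P') := by linarith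
    _ = _ := by ring

lemma add_lt_mul_mul_of_lt_div {a b L : ℝ} (hb : 0 < b) (hL : L < 0)
    (h : a < -b / (-b * L + 1)) : a + b < a * b * L := by
  have hD : 0 < -b * L + 1 := by nlinarith
  have := (lt_div_iff₀ hD).mp h
  linarith

lemma mul_sub_mul_sub_add_pos {a b L σ : ℝ} (hL : L ≤ 0) (hb : 0 < b) (hab : 0 < a + b)
    (h : a + b < a * b * L) (hσ0 : 0 ≤ σ) (hσ : σ ≤ -a) :
    0 < L * ((σ - a) * (σ - b)) + (2 * σ - a - b) := by
  -- At `σ = -a`, multiplying by `b` and using `h` leaves `2a² + ab + b² > 0`.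
  have hend : 0 < L * (-a) ^ 2 + (2 - L * (a + b)) * (-a) + (L * a * b - (a + b)) := by
    nlinarith [mul_lt_mul_of_pos_left h hab, sq_nonneg (4 * a + b)]
  have := quadratic_pos_of_pos_of_pos hL (by linarith) hend hσ0 hσ
  linarith

theorem stmt_4 (T α₀ α₁ : ℝ) (hT0 : 0 < T) (hT1 : T < 1) (hα₁ : 1/2 < α₁)
    (hsum : α₀ + α₁ > 1)
    (hα₀ : α₀ < (1/2 - α₁) / ((1/2 - α₁) * Real.log (1-T) + 1) + 1/2)
    (G : ℝ → ℝ)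
    (hG : G = fun σ => (σ + α₀ - 1/2) * (σ + α₁ - 1/2)
      - (1-T) ^ (2*σ) * ((σ - α₀ + 1/2) * (σ - α₁ + 1/2))) :
    (∀ σ, 0 ≤ σ → σ ≤ 1/2 - α₀ → iteratedDeriv 2 G σ > 0) ∧
    StrictConvexOn ℝ (Set.Icc (0:ℝ) (1/2 - α₀)) G := by
  have hL : log (1 - T) < 0 := log_neg (by linarith) (by linarith)
  have hkey : (α₀ - 1/2) + (α₁ - 1/2) < (α₀ - 1/2) * (α₁ - 1/2) * log (1 - T) :=
    add_lt_mul_mul_of_lt_div (by linarith) hL (by rw [neg_sub]; linarith)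
  have hGexp : G = fun s => (s + (α₀ - 1/2)) * (s + (α₁ - 1/2))
      - exp (2 * log (1 - T) * s) * ((s - (α₀ - 1/2)) * (s - (α₁ - 1/2))) := by
    rw [hG]; funext s; rw [rpow_def_of_pos (by linarith)]; ring_nf
  have hG'' : ∀ σ ∈ Set.Icc 0 (1/2 - α₀), 0 < iteratedDeriv 2 G σ := by
    rintro σ ⟨hσ0, hσ⟩
    rw [hGexp, iteratedDeriv_two_quad_sub_exp_mul_quad]
    apply two_sub_exp_mul_pos (by linarith) hσ0
    have := mul_sub_mul_sub_add_pos hL.le (by linarith) (by linarith) hkey hσ0 (by linarith)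
    linarith
  refine ⟨fun σ h0 h1 => hG'' σ ⟨h0, h1⟩,
    strictConvexOn_of_deriv2_pos' (convex_Icc _ _) (by rw [hGexp]; fun_prop) fun x hx => ?_⟩
  rw [← iteratedDeriv_eq_iterate]
  exact hG'' x hx
end

section
/- Let 0 < T < 1, α₁ > 1/2, α₀ + α₁ > 1, and α₀ < (1/2 - α₁)/((1/2 - α₁)·ln(1-T) + 1) + 1/2. Define G(σ) = (σ + α₀ - 1/2)(σ + α₁ - 1/2) - (1-T)^{2σ}(σ - α₀ + 1/2)(σ - α₁ + 1/2). Then G has a unique zero σ₀ in the open interval (0, 1/2 - α₀). -/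
/-!
Write `a = α₀ - 1/2`, `b = α₁ - 1/2`, `L = log (1 - T)`, so that
`G σ = (σ + a)(σ + b) - e^{2Lσ}(σ - a)(σ - b)`. The hypothesis on `α₀` says exactly
`a + b < L a b`, which forces `a < 0` and makes `G'(0) = 2(a + b) - 2Lab` negative, while
`G(0) = 0` and `G(-a) > 0`. With `w = 2Lσ ≤ 0` the second derivative is
`2 - e^w (w² + 4w + 2 + (negative terms))`, which is positive because `e^w (w² + 4w + 2) ≤ 2`
for `w ≤ 0`. So `G` is strictly convex on `σ ≥ 0`: it dips below zero right after `0`, crosses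
zero on the way to `G(-a) > 0`, and cannot vanish twice after `0`.
-/

open Real Set Filter

theorem exp_mul_quadratic_le_two {w : ℝ} (hw : w ≤ 0) : exp w * (w ^ 2 + 4 * w + 2) ≤ 2 := by
  have hquad := quadratic_le_exp_of_nonneg (neg_nonneg.2 hw)
  have hinv : exp w * exp (-w) = 1 := by rw [← exp_add, add_neg_cancel, exp_zero]
  nlinarith [mul_nonneg (exp_pos w).le (sub_nonneg.2 hquad),
    mul_nonneg (exp_pos w).le (neg_nonneg.2 hw)]

theorem StrictConvexOn.existsUnique_mem_Ioo_eq_zero {f : ℝ → ℝ} {f' a b : ℝ} (hab : a < b)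
    (hconv : StrictConvexOn ℝ (Icc a b) f) (hcont : ContinuousOn f (Icc a b)) (hfa : f a = 0)
    (hderiv : HasDerivWithinAt f f' (Ici a) a) (hf' : f' < 0) (hfb : 0 < f b) :
    ∃! x, x ∈ Ioo a b ∧ f x = 0 := by
  obtain ⟨c, hslope, hc⟩ : ∃ c, slope f a c < 0 ∧ c ∈ Ioo a b :=
    ((hderiv.liminf_right_slope_le hf').and_eventually (Ioo_mem_nhdsGT hab)).exists
  have hfc : f c < 0 := by
    rwa [slope_def_field, hfa, sub_zero, div_lt_iff₀ (sub_pos.2 hc.1), zero_mul] at hslope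
  obtain ⟨x, hx, hfx⟩ : 0 ∈ f '' Ioo c b :=
    intermediate_value_Ioo hc.2.le (hcont.mono (Icc_subset_Icc hc.1.le le_rfl)) ⟨hfc, hfb⟩
  have hxab : x ∈ Ioo a b := ⟨hc.1.trans hx.1, hx.2⟩
  have neg_of_lt_zero : ∀ y z, y ∈ Ioo a b → z ∈ Ioo a b → f z = 0 → y < z → f y < 0 := by
    intro y z hy hz hfz hyz
    have := hconv.lt_on_openSegment (left_mem_Icc.2 hab.le) (Ioo_subset_Icc_self hz)
      hz.1.ne (by rw [openSegment_eq_Ioo hz.1]; exact ⟨hy.1, hyz⟩)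
    rwa [hfa, hfz, max_self] at this
  refine ⟨x, ⟨hxab, hfx⟩, fun y ⟨hy, hfy⟩ => le_antisymm ?_ ?_⟩
  · exact not_lt.1 fun h => (neg_of_lt_zero x y hxab hy hfy h).ne hfx
  · exact not_lt.1 fun h => (neg_of_lt_zero y x hy hxab hfx h).ne hfy

section

variable (a b L : ℝ)

noncomputable def shiftedG (σ : ℝ) : ℝ :=
  (σ + a) * (σ + b) - exp (2 * L * σ) * ((σ - a) * (σ - b))

theorem hasDerivAt_shiftedG (σ : ℝ) :
    HasDerivAt (shiftedG a b L)
      (2 * σ + (a + b) - exp (2 * L * σ) * (2 * L * ((σ - a) * (σ - b)) + (2 * σ - (a + b)))) σ := by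
  have hid := hasDerivAt_id σ
  have := ((hid.add_const a).mul (hid.add_const b)).sub
    ((hid.const_mul (2 * L)).exp.mul ((hid.sub_const a).mul (hid.sub_const b)))
  refine this.congr_deriv ?_
  simp only [id, Pi.mul_apply]
  ring

theorem continuous_shiftedG : Continuous (shiftedG a b L) :=
  continuous_iff_continuousAt.2 fun σ => (hasDerivAt_shiftedG a b L σ).continuousAt

theorem hasDerivAt_deriv_shiftedG (σ : ℝ) :
    HasDerivAt (deriv (shiftedG a b L))
      (2 - exp (2 * L * σ) * ((2 * L * (σ - a) + 2) * (2 * L * (σ - b) + 2) - 2)) σ := by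
  rw [funext fun τ => (hasDerivAt_shiftedG a b L τ).deriv]
  have hid := hasDerivAt_id σ
  have := ((hid.const_mul 2).add_const (a + b)).sub ((hid.const_mul (2 * L)).exp.mul
    ((((hid.sub_const a).mul (hid.sub_const b)).const_mul (2 * L)).add
      ((hid.const_mul 2).sub_const (a + b))))
  refine this.congr_deriv ?_
  simp only [id, Pi.mul_apply, Pi.add_apply]
  ring

variable {a b L}

theorem deriv_deriv_shiftedG_pos (hL : L < 0) (hab : 0 < a + b) (hkey : a + b < L * a * b)
    {σ : ℝ} (hσ : 0 ≤ σ) : 0 < deriv (deriv (shiftedG a b L)) σ := by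
  rw [(hasDerivAt_deriv_shiftedG a b L σ).deriv]
  have hw : 2 * L * σ ≤ 0 := mul_nonpos_of_nonpos_of_nonneg (by linarith) hσ
  have hrest : -2 * L * (a + b) * (2 * L * σ) + 4 * L * (L * a * b - (a + b)) < 0 := by
    nlinarith [mul_nonneg (mul_nonneg (neg_nonneg.2 hL.le) hab.le) (neg_nonneg.2 hw)]
  have := mul_neg_of_pos_of_neg (exp_pos (2 * L * σ)) hrest
  rw [sub_pos]
  calc exp (2 * L * σ) * ((2 * L * (σ - a) + 2) * (2 * L * (σ - b) + 2) - 2)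
      = exp (2 * L * σ) * ((2 * L * σ) ^ 2 + 4 * (2 * L * σ) + 2)
        + exp (2 * L * σ) * (-2 * L * (a + b) * (2 * L * σ) + 4 * L * (L * a * b - (a + b))) := by
        ring
    _ < exp (2 * L * σ) * ((2 * L * σ) ^ 2 + 4 * (2 * L * σ) + 2) := by linarith
    _ ≤ 2 := exp_mul_quadratic_le_two hw

theorem strictConvexOn_shiftedG (hL : L < 0) (hab : 0 < a + b) (hkey : a + b < L * a * b) :
    StrictConvexOn ℝ (Ici 0) (shiftedG a b L) := by
  refine strictConvexOn_of_deriv2_pos (convex_Ici 0) (continuous_shiftedG a b L).continuousOn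
    fun σ hσ => ?_
  rw [interior_Ici] at hσ
  rw [Function.iterate_succ_apply, Function.iterate_one]
  exact deriv_deriv_shiftedG_pos hL hab hkey hσ.le

theorem existsUnique_shiftedG_eq_zero (hb : 0 < b) (hL : L < 0) (hab : 0 < a + b)
    (hkey : a + b < L * a * b) : ∃! σ, σ ∈ Ioo 0 (-a) ∧ shiftedG a b L σ = 0 := by
  have ha : a < 0 := by
    by_contra! h
    nlinarith [mul_nonneg h hb.le]
  refine ((strictConvexOn_shiftedG hL hab hkey).subset Icc_subset_Ici_self (convex_Icc _ _))
    |>.existsUnique_mem_Ioo_eq_zero (by linarith) (continuous_shiftedG a b L).continuousOn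
      (by simp [shiftedG]) (hasDerivAt_shiftedG a b L 0).hasDerivWithinAt ?_ ?_
  · simp only [mul_zero, exp_zero, zero_add, zero_sub, one_mul]
    nlinarith
  · simp only [shiftedG]
    nlinarith [mul_pos (exp_pos (2 * L * -a)) (mul_pos (neg_pos.2 ha) hab)]

end

theorem stmt_5 (T α₀ α₁ : ℝ) (hT0 : 0 < T) (hT1 : T < 1) (hα₁ : 1/2 < α₁)
    (hsum : α₀ + α₁ > 1)
    (hα₀ : α₀ < (1/2 - α₁) / ((1/2 - α₁) * Real.log (1-T) + 1) + 1/2)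
    (G : ℝ → ℝ)
    (hG : G = fun σ => (σ + α₀ - 1/2) * (σ + α₁ - 1/2)
      - (1-T) ^ (2*σ) * ((σ - α₀ + 1/2) * (σ - α₁ + 1/2))) :
    ∃! σ₀, σ₀ ∈ Set.Ioo (0:ℝ) (1/2 - α₀) ∧ G σ₀ = 0 := by
  have h1T : 0 < 1 - T := by linarith
  have hL : log (1 - T) < 0 := log_neg h1T (by linarith)
  have hG' : G = shiftedG (α₀ - 1/2) (α₁ - 1/2) (log (1 - T)) := by
    funext σ
    simp only [hG, shiftedG, rpow_def_of_pos h1T]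
    ring_nf
  have hkey : α₀ - 1/2 + (α₁ - 1/2) < log (1 - T) * (α₀ - 1/2) * (α₁ - 1/2) := by
    have hD : 0 < (1/2 - α₁) * log (1 - T) + 1 := by nlinarith
    have := (lt_div_iff₀ hD).1 (sub_lt_iff_lt_add.2 hα₀)
    linarith
  rw [hG', show 1/2 - α₀ = -(α₀ - 1/2) by ring]
  exact existsUnique_shiftedG_eq_zero (by linarith) hL (by linarith) hkey
end
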